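/- Let T be a dyadic tree decomposition of [0,1]^n (children of Q are subsets of Q; cubes are disjoint or nested; μ(⋃ Child(Q)) < μ(Q)/4 for every Q) and suppose x ∈ [0,1]^n lies in an infinite descending path of cubes of T whose measures tend to 0. Then with f defined as 1 on Q ∖ ⋃Child(Q) for even-level Q and 0 for odd-level Q, the limit lim_{Q→x} (1/μ(Q)) ∫_Q f dμ over cubes containing x with diameter → 0 does not exist; in particular x is not a Lebesgue point of f. -/

import Mathlib

open MeasureTheory

/-- The half-open dyadic cube of precision `r` at `a`. -/
noncomputable def dCube (n r : ℕ) (a : Fin n → ℤ) : Set (Fin n → ℝ) :=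
  Set.univ.pi fun i => Set.Ico ((a i : ℝ) / 2 ^ r) (((a i : ℝ) + 1) / 2 ^ r)

/-- An open cube with corner `c` and side `s`. -/
def openCube (n : ℕ) (c : Fin n → ℝ) (s : ℝ) : Set (Fin n → ℝ) :=
  Set.univ.pi fun i => Set.Ioo (c i) (c i + s)

/-!
Since `f` takes only the values `0` and `1`, its average over a set `S` is the density of
`{f = 1}` in `S`. A dyadic cube `Q` of the path is slightly enlarged to an open cube `S ⊇ Q`
with `|S| ≤ 5/4 |Q|`. The core `Q \ ⋃ Child(Q)` fills more than `3/4` of `Q`, hence at least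
`3/5` of `S`, so the average of `f` over `S` is at least `3/5` when `Q` has even level and at
most `2/5` when it has odd level. Both parities occur infinitely often along the path and the
enlarged cubes shrink to `x`, so the averages have no limit.
-/

open Filter Topology

section Density

variable {α : Type*} [MeasurableSpace α] {μ : Measure α}

theorem setIntegral_eq_measureReal_inter_of_zero_or_one {f : α → ℝ} (hf : Measurable f)
    (hf01 : ∀ x, f x = 0 ∨ f x = 1) (S : Set α) :
    ∫ x in S, f x ∂μ = μ.real (S ∩ {x | f x = 1}) := by
  have hind : f = {x | f x = 1}.indicator 1 := by
    funext x
    rcases hf01 x with h | h <;> simp [Set.indicator, h]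
  rw [hind, integral_indicator_one (measurableSet_eq_fun hf measurable_const),
    measureReal_restrict_apply (measurableSet_eq_fun hf measurable_const), Set.inter_comm]
  simp only [← hind]

theorem three_fifths_le_measureReal_inter_div {S Q C E : Set α} (hQS : Q ⊆ S) (hS : μ S ≠ ⊤)
    (hC : μ C < μ Q / 4) (hSQ : μ.real S ≤ 5 / 4 * μ.real Q) (hE : Q \ C ⊆ E) :
    3 / 5 ≤ μ.real (S ∩ E) / μ.real S := by
  have hQ : μ Q ≠ ⊤ := measure_ne_top_of_subset hQS hS
  have hC' : μ.real C < μ.real Q / 4 := by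
    have := ENNReal.toReal_strict_mono (ENNReal.div_ne_top hQ (by norm_num)) hC
    rwa [ENNReal.toReal_div, ENNReal.toReal_ofNat] at this
  have hQ_le : μ.real Q ≤ μ.real (S ∩ E) + μ.real C :=
    calc μ.real Q ≤ μ.real (S ∩ E ∪ C) := by
          refine measureReal_mono (fun x hx => ?_) ?_
          · by_cases hxC : x ∈ C
            · exact Or.inr hxC
            · exact Or.inl ⟨hQS hx, hE ⟨hx, hxC⟩⟩
          · exact measure_union_ne_top (measure_ne_top_of_subset Set.inter_subset_left hS)
              (ne_top_of_lt hC)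
      _ ≤ μ.real (S ∩ E) + μ.real C := measureReal_union_le _ _
  have hS_pos : 0 < μ.real S := by
    have := measureReal_nonneg (μ := μ) (s := C)
    have := measureReal_mono hQS hS
    linarith
  rw [le_div_iff₀ hS_pos]
  linarith

theorem three_fifths_le_setIntegral_div_of_eq_one {f : α → ℝ} (hf : Measurable f)
    (hf01 : ∀ x, f x = 0 ∨ f x = 1) {S Q C : Set α} (hQS : Q ⊆ S) (hS : μ S ≠ ⊤)
    (hC : μ C < μ Q / 4) (hSQ : μ.real S ≤ 5 / 4 * μ.real Q) (hf1 : ∀ x ∈ Q \ C, f x = 1) :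
    3 / 5 ≤ (∫ x in S, f x ∂μ) / μ.real S := by
  rw [setIntegral_eq_measureReal_inter_of_zero_or_one hf hf01]
  exact three_fifths_le_measureReal_inter_div hQS hS hC hSQ hf1

theorem setIntegral_div_le_two_fifths_of_eq_zero {f : α → ℝ} (hf : Measurable f)
    (hf01 : ∀ x, f x = 0 ∨ f x = 1) {S Q C : Set α} (hQS : Q ⊆ S) (hS : μ S ≠ ⊤)
    (hC : μ C < μ Q / 4) (hSQ : μ.real S ≤ 5 / 4 * μ.real Q) (hf0 : ∀ x ∈ Q \ C, f x = 0) :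
    (∫ x in S, f x ∂μ) / μ.real S ≤ 2 / 5 := by
  set E := {x | f x = 1}
  have hzeros : 3 / 5 ≤ μ.real (S \ E) / μ.real S := by
    rw [Set.sdiff_eq]
    refine three_fifths_le_measureReal_inter_div hQS hS hC hSQ fun x hx hx1 => ?_
    simp_all [E]
  have hS0 : μ.real S ≠ 0 := by
    intro h
    rw [h, div_zero] at hzeros
    norm_num at hzeros
  have hsplit : μ.real (S ∩ E) + μ.real (S \ E) = μ.real S :=
    measureReal_inter_add_sdiff (measurableSet_eq_fun hf measurable_const) hS
  calc (∫ x in S, f x ∂μ) / μ.real S = 1 - μ.real (S \ E) / μ.real S := by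
        rw [setIntegral_eq_measureReal_inter_of_zero_or_one hf hf01, eq_sub_iff_add_eq,
          ← add_div, hsplit, div_self hS0]
    _ ≤ 2 / 5 := by linarith

end Density

theorem Filter.Tendsto.of_pow_nhds_zero {β : Type*} {l : Filter β} {t : β → ℝ} {n : ℕ}
    (ht : ∀ k, 0 ≤ t k) (h : Tendsto (fun k => t k ^ n) l (𝓝 0)) :
    Tendsto t l (𝓝 0) := by
  refine tendsto_order.2 ⟨fun a ha => Eventually.of_forall fun k => ha.trans_le (ht k),
    fun ε hε => ?_⟩
  filter_upwards [(tendsto_order.1 h).2 _ (pow_pos hε n)] with k hk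
  exact lt_of_pow_lt_pow_left₀ n hε.le hk

section Cubes

variable {n : ℕ}

theorem volume_dCube (r : ℕ) (a : Fin n → ℤ) :
    volume (dCube n r a) = ENNReal.ofReal ((2 ^ r : ℝ)⁻¹) ^ n := by
  simp [dCube, volume_pi_pi, Real.volume_Ico, ← sub_div]

theorem measureReal_dCube (r : ℕ) (a : Fin n → ℤ) :
    volume.real (dCube n r a) = ((2 ^ r : ℝ)⁻¹) ^ n := by
  rw [measureReal_def, volume_dCube, ENNReal.toReal_pow, ENNReal.toReal_ofReal (by positivity)]

theorem volume_openCube (c : Fin n → ℝ) (s : ℝ) :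
    volume (openCube n c s) = ENNReal.ofReal s ^ n := by
  simp [openCube, volume_pi_pi, Real.volume_Ioo]

theorem dCube_subset_openCube (r : ℕ) (a : Fin n → ℤ) {δ : ℝ} (hδ : 0 < δ) :
    dCube n r a ⊆ openCube n (fun i => (a i - δ) / 2 ^ r) ((1 + 2 * δ) / 2 ^ r) := by
  intro y hy i _
  obtain ⟨h1, h2⟩ := hy i (Set.mem_univ i)
  constructor
  · calc (a i - δ) / 2 ^ r < a i / 2 ^ r := by gcongr; exact sub_lt_self _ hδ
      _ ≤ y i := h1
  · calc y i < (a i + 1) / 2 ^ r := h2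
      _ < (a i - δ) / 2 ^ r + (1 + 2 * δ) / 2 ^ r := by
          rw [← add_div]; exact div_lt_div_of_pos_right (by linarith) (by positivity)

theorem measureReal_openCube_eq_mul_measureReal_dCube (r : ℕ) (a : Fin n → ℤ) {δ : ℝ}
    (hδ : 0 ≤ δ) :
    volume.real (openCube n (fun i => (a i - δ) / 2 ^ r) ((1 + 2 * δ) / 2 ^ r)) =
      (1 + 2 * δ) ^ n * volume.real (dCube n r a) := by
  rw [measureReal_def, volume_openCube, ENNReal.toReal_pow, ENNReal.toReal_ofReal (by positivity),
    measureReal_dCube, div_eq_mul_inv, mul_pow]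

end Cubes

theorem exists_pos_one_add_two_mul_pow_lt (n : ℕ) {K : ℝ} (hK : 1 < K) :
    ∃ δ : ℝ, 0 < δ ∧ (1 + 2 * δ) ^ n < K := by
  have hcont : Continuous fun δ : ℝ => (1 + 2 * δ) ^ n := by fun_prop
  have h : Tendsto (fun δ : ℝ => (1 + 2 * δ) ^ n) (𝓝 0) (𝓝 1) := by
    simpa using hcont.tendsto 0
  exact (h.eventually (gt_mem_nhds hK)).exists_gt

section EnlargedCube

variable {n : ℕ} {f : (Fin n → ℝ) → ℝ} {r : ℕ} {a : Fin n → ℤ} {C : Set (Fin n → ℝ)} {δ : ℝ}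

theorem three_fifths_le_average_openCube_of_eq_one (hf : Measurable f)
    (hf01 : ∀ x, f x = 0 ∨ f x = 1) (hC : volume C < volume (dCube n r a) / 4)
    (hf1 : ∀ x ∈ dCube n r a \ C, f x = 1) (hδ : 0 < δ) (hδn : (1 + 2 * δ) ^ n ≤ 5 / 4) :
    3 / 5 ≤ (∫ y in openCube n (fun i => (a i - δ) / 2 ^ r) ((1 + 2 * δ) / 2 ^ r), f y) /
      volume.real (openCube n (fun i => (a i - δ) / 2 ^ r) ((1 + 2 * δ) / 2 ^ r)) := by
  refine three_fifths_le_setIntegral_div_of_eq_one hf hf01 (dCube_subset_openCube r a hδ)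
    (by simp [volume_openCube]) hC ?_ hf1
  rw [measureReal_openCube_eq_mul_measureReal_dCube r a hδ.le]
  exact mul_le_mul_of_nonneg_right hδn measureReal_nonneg

theorem average_openCube_le_two_fifths_of_eq_zero (hf : Measurable f)
    (hf01 : ∀ x, f x = 0 ∨ f x = 1) (hC : volume C < volume (dCube n r a) / 4)
    (hf0 : ∀ x ∈ dCube n r a \ C, f x = 0) (hδ : 0 < δ) (hδn : (1 + 2 * δ) ^ n ≤ 5 / 4) :
    (∫ y in openCube n (fun i => (a i - δ) / 2 ^ r) ((1 + 2 * δ) / 2 ^ r), f y) /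
      volume.real (openCube n (fun i => (a i - δ) / 2 ^ r) ((1 + 2 * δ) / 2 ^ r)) ≤ 2 / 5 := by
  refine setIntegral_div_le_two_fifths_of_eq_zero hf hf01 (dCube_subset_openCube r a hδ)
    (by simp [volume_openCube]) hC ?_ hf0
  rw [measureReal_openCube_eq_mul_measureReal_dCube r a hδ.le]
  exact mul_le_mul_of_nonneg_right hδn measureReal_nonneg

end EnlargedCube

theorem frequently_even_and_frequently_odd {u : ℕ → ℕ} (hu : ∀ k, u (k + 1) = u k + 1) :
    (∃ᶠ k in atTop, Even (u k)) ∧ ∃ᶠ k in atTop, ¬Even (u k) := by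
  have hu0 : ∀ k, u k = u 0 + k := fun k => by
    induction k with
    | zero => rfl
    | succ k ih => rw [hu, ih, add_assoc]
  refine ⟨frequently_atTop.2 fun m => ⟨m + (u 0 + m) % 2, by omega, ?_⟩,
    frequently_atTop.2 fun m => ⟨m + (u 0 + m + 1) % 2, by omega, ?_⟩⟩ <;>
  rw [hu0, Nat.even_iff] <;> omega

theorem stmt13_general (n : ℕ) (ι : Type)
    (cube : ι → Set (Fin n → ℝ)) (level : ι → ℕ) (children : ι → Set ι)
    (hdyadic : ∀ i, ∃ (r : ℕ) (a : Fin n → ℤ), cube i = dCube n r a)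
    (hchild_level : ∀ i, ∀ j ∈ children i, level j = level i + 1)
    (hmeas : ∀ i, volume (⋃ j ∈ children i, cube j) < volume (cube i) / 4)
    (f : (Fin n → ℝ) → ℝ) (hfmeas : Measurable f)
    (hf01 : ∀ x, f x = 0 ∨ f x = 1)
    (hfdef : ∀ i, ∀ x ∈ cube i \ ⋃ j ∈ children i, cube j,
      f x = if Even (level i) then 1 else 0)
    (x : Fin n → ℝ)
    (hpath : ∃ p : ℕ → ι, (∀ k, p (k + 1) ∈ children (p k)) ∧ (∀ k, x ∈ cube (p k)) ∧
      Filter.Tendsto (fun k => volume (cube (p k))) Filter.atTop (nhds 0)) :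
    ¬ ∃ L : ℝ, ∀ (c : ℕ → Fin n → ℝ) (s : ℕ → ℝ),
        (∀ k, 0 < s k) →
        (∀ k, x ∈ openCube n (c k) (s k)) →
        Filter.Tendsto s Filter.atTop (nhds 0) →
        Filter.Tendsto
          (fun k => (∫ y in openCube n (c k) (s k), f y) /
            (volume (openCube n (c k) (s k))).toReal)
          Filter.atTop (nhds L) := by
  rintro ⟨L, hL⟩
  obtain ⟨p, hp_child, hx, hvol⟩ := hpath
  choose r a hra using hdyadic
  obtain ⟨δ, hδ, hδn⟩ := exists_pos_one_add_two_mul_pow_lt n (by norm_num : (1 : ℝ) < 5 / 4)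
  have hside : Tendsto (fun k => ((2 : ℝ) ^ r (p k))⁻¹) atTop (𝓝 0) := by
    refine Tendsto.of_pow_nhds_zero (n := n) (fun k => by positivity) ?_
    have h := (ENNReal.tendsto_toReal ENNReal.zero_ne_top).comp hvol
    simpa only [Function.comp_def, ← measureReal_def, hra, measureReal_dCube,
      ENNReal.toReal_zero] using h
  have hlim := hL (fun k i => (a (p k) i - δ) / 2 ^ r (p k)) (fun k => (1 + 2 * δ) / 2 ^ r (p k))
    (fun k => by positivity) (fun k => dCube_subset_openCube _ _ hδ (hra (p k) ▸ hx k))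
    (by simpa [div_eq_mul_inv] using hside.const_mul (1 + 2 * δ))
  have hcore : ∀ k, ∀ y ∈ dCube n (r (p k)) (a (p k)) \ ⋃ j ∈ children (p k), cube j,
      f y = if Even (level (p k)) then 1 else 0 := fun k y hy =>
    hfdef (p k) y (by rwa [hra])
  obtain ⟨h_even, h_odd⟩ := frequently_even_and_frequently_odd (u := fun k => level (p k))
    fun k => hchild_level _ _ (hp_child k)
  have hL_ge : 3 / 5 ≤ L := isClosed_Ici.mem_of_frequently_of_tendsto (h_even.mono fun k hk =>
    three_fifths_le_average_openCube_of_eq_one hfmeas hf01 (hra (p k) ▸ hmeas (p k))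
      (fun y hy => by simpa [hk] using hcore k y hy) hδ hδn.le) hlim
  have hL_le : L ≤ 2 / 5 := isClosed_Iic.mem_of_frequently_of_tendsto (h_odd.mono fun k hk =>
    average_openCube_le_two_fifths_of_eq_zero hfmeas hf01 (hra (p k) ▸ hmeas (p k))
      (fun y hy => by simpa [hk] using hcore k y hy) hδ hδn.le) hlim
  linarith

/-- with `T` a dyadic tree decomposition and `f` the alternating
indicator function of STATEMENT 12, if `x` lies in an infinite descending path of
cubes of `T` whose measures tend to `0`, then the limit of the averages of `f` over
open cubes containing `x` with diameter tending to `0` does not exist; in particular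
`x` is not a Lebesgue point of `f`. -/
theorem stmt13 (n : ℕ) (ι : Type) [Countable ι]
    (cube : ι → Set (Fin n → ℝ)) (level : ι → ℕ) (children : ι → Set ι)
    (hdyadic : ∀ i, ∃ (r : ℕ) (a : Fin n → ℤ), cube i = dCube n r a)
    (hroot : ∃ i0, cube i0 = dCube n 0 0 ∧ level i0 = 0)
    (hchild_sub : ∀ i, ∀ j ∈ children i, cube j ⊆ cube i)
    (hchild_level : ∀ i, ∀ j ∈ children i, level j = level i + 1)
    (hnest : ∀ i j, cube i ∩ cube j = ∅ ∨ cube i ⊆ cube j ∨ cube j ⊆ cube i)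
    (hmeas : ∀ i, volume (⋃ j ∈ children i, cube j) < volume (cube i) / 4)
    (f : (Fin n → ℝ) → ℝ) (hfmeas : Measurable f)
    (hf01 : ∀ x, f x = 0 ∨ f x = 1)
    (hfdef : ∀ i, ∀ x ∈ cube i \ ⋃ j ∈ children i, cube j,
      f x = if Even (level i) then 1 else 0)
    (x : Fin n → ℝ)
    (hpath : ∃ p : ℕ → ι, (∀ k, p (k + 1) ∈ children (p k)) ∧ (∀ k, x ∈ cube (p k)) ∧
      Filter.Tendsto (fun k => volume (cube (p k))) Filter.atTop (nhds 0)) :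
    ¬ ∃ L : ℝ, ∀ (c : ℕ → Fin n → ℝ) (s : ℕ → ℝ),
        (∀ k, 0 < s k) →
        (∀ k, x ∈ openCube n (c k) (s k)) →
        Filter.Tendsto s Filter.atTop (nhds 0) →
        Filter.Tendsto
          (fun k => (∫ y in openCube n (c k) (s k), f y) /
            (volume (openCube n (c k) (s k))).toReal)
          Filter.atTop (nhds L) :=
  stmt13_general n ι cube level children hdyadic hchild_level hmeas f hfmeas hf01 hfdef x hpath
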